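/- arXiv:1901.00209 — 3 statements merged into one kernel-verified Lean document; each statement's English description precedes it below -/
import Mathlib

section
/- Under the simplified communication model where a single message performs a walk v_0, v_1, ..., v_T on the graph (at each step t node v_t pushes the message to v_{t+1}, and only the opinion of the receiving node changes), the total change in opinion Σ_{v∈V} (μ^{(v)}_{θ̃,T} − μ^{(v)}_{θ̃,0}) equals Σ_{t=0}^{T−1} μ^{(v_{t+1})}_{θ̃,t}(1 − μ^{(v_{t+1})}_{θ̃,t}) / (μ^{(v_{t+1})}_{θ̃,t} + α^{(v_{t+1})}_{θ̃,t}·β^{(v_{t+1})}/ζ^{(v_{t+1})}). Hence maximizing the final total opinion over walk choices is equivalent to maximizing this sum of per-step rewards. -/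
/-!
Only the receiving node `v (t + 1)` changes its opinion at step `t`, so the total change over
the walk telescopes into the sum of the one-step gains of the receivers. Writing `a, r` for the
receiver's `α, ρ` and `b, z` for its `β, ζ`, that gain is
`(b a + z) / (b r + z) - a / r = z (r - a) / (r (b r + z))`, which is the stated reward rewritten
in terms of `μ = a / r`.
-/

open Finset

theorem sum_sub_eq_sum_range_of_eq_of_ne {V M : Type*} [Fintype V] [AddCommGroup M]
    (f : V → ℕ → M) (u : ℕ → V) (hf : ∀ t w, w ≠ u t → f w (t + 1) = f w t) (T : ℕ) :
    ∑ w, (f w T - f w 0) = ∑ t ∈ range T, (f (u t) (t + 1) - f (u t) t) := by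
  calc ∑ w, (f w T - f w 0)
      = ∑ w, ∑ t ∈ range T, (f w (t + 1) - f w t) := by simp only [sum_range_sub]
    _ = ∑ t ∈ range T, ∑ w, (f w (t + 1) - f w t) := sum_comm
    _ = ∑ t ∈ range T, (f (u t) (t + 1) - f (u t) t) := by
        refine sum_congr rfl fun t _ => Fintype.sum_eq_single _ fun w hw => ?_
        rw [hf t w hw, sub_self]

theorem mul_add_div_mul_add_sub_div_eq {a r b z : ℝ} (ha : a ≠ 0) (hr : r ≠ 0) (hz : z ≠ 0)
    (hd : b * r + z ≠ 0) :
    (b * a + z) / (b * r + z) - a / r = a / r * (1 - a / r) / (a / r + a * b / z) := by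
  have hsum : a / r + a * b / z = a * (b * r + z) / (r * z) := by field_simp; ring
  rw [hsum]
  field_simp
  ring

theorem stmt_1_general {V : Type*} [Fintype V] (T : ℕ) (v : ℕ → V)
    (α ρ : V → ℕ → ℝ) (β ζ : V → ℝ)
    (hβ : ∀ w, β w ∈ Set.Ioo (0:ℝ) 1) (hζ : ∀ w, 0 < ζ w)
    (hαpos : ∀ w t, 0 < α w t) (hρpos : ∀ w t, 0 < ρ w t)
    (μ : V → ℕ → ℝ) (hμ : ∀ w t, μ w t = α w t / ρ w t)
    -- the receiving node updates its belief
    (hupd_α : ∀ t, α (v (t + 1)) (t + 1) = β (v (t + 1)) * α (v (t + 1)) t + ζ (v (t + 1)))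
    (hupd_ρ : ∀ t, ρ (v (t + 1)) (t + 1) = β (v (t + 1)) * ρ (v (t + 1)) t + ζ (v (t + 1)))
    -- all other nodes' opinions remain unchanged
    (hother : ∀ t w, w ≠ v (t + 1) → μ w (t + 1) = μ w t) :
    ∑ w : V, (μ w T - μ w 0) =
      ∑ t ∈ Finset.range T,
        μ (v (t + 1)) t * (1 - μ (v (t + 1)) t) /
          (μ (v (t + 1)) t + α (v (t + 1)) t * β (v (t + 1)) / ζ (v (t + 1))) := by
  rw [sum_sub_eq_sum_range_of_eq_of_ne μ (fun t => v (t + 1)) hother T]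
  refine sum_congr rfl fun t _ => ?_
  set u := v (t + 1)
  have hd : 0 < β u * ρ u t + ζ u := by
    have := (hβ u).1; have := hρpos u t; have := hζ u; positivity
  rw [hμ u (t + 1), hμ u t, hupd_α, hupd_ρ]
  exact mul_add_div_mul_add_sub_div_eq (hαpos u t).ne' (hρpos u t).ne' (hζ u).ne' hd.ne'

theorem stmt_1 {V : Type*} [Fintype V] (T : ℕ) (v : ℕ → V)
    (α ρ : V → ℕ → ℝ) (β ζ : V → ℝ)
    (hβ : ∀ w, β w ∈ Set.Ioo (0:ℝ) 1) (hζ : ∀ w, 0 < ζ w)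
    (hαpos : ∀ w t, 0 < α w t) (hρpos : ∀ w t, 0 < ρ w t)
    (μ : V → ℕ → ℝ) (hμ : ∀ w t, μ w t = α w t / ρ w t)
    (hwalk : ∀ t, v t ≠ v (t + 1))
    -- the receiving node updates its belief
    (hupd_α : ∀ t, α (v (t + 1)) (t + 1) = β (v (t + 1)) * α (v (t + 1)) t + ζ (v (t + 1)))
    (hupd_ρ : ∀ t, ρ (v (t + 1)) (t + 1) = β (v (t + 1)) * ρ (v (t + 1)) t + ζ (v (t + 1)))
    -- all other nodes' opinions remain unchanged
    (hother : ∀ t w, w ≠ v (t + 1) → μ w (t + 1) = μ w t) :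
    ∑ w : V, (μ w T - μ w 0) =
      ∑ t ∈ Finset.range T,
        μ (v (t + 1)) t * (1 - μ (v (t + 1)) t) /
          (μ (v (t + 1)) t + α (v (t + 1)) t * β (v (t + 1)) / ζ (v (t + 1))) :=
  stmt_1_general T v α ρ β ζ hβ hζ hαpos hρpos μ hμ hupd_α hupd_ρ hother
end

section
/- In the toy example, with r_c, r_d, R_{cc}, R_{dd}, η^{(c)}, η^{(d)} defined as before, if r_d/r_c < ((1+η^{(c)})/(1+2η^{(c)}))·((1+2η^{(d)})/(1+η^{(d)})), then R_{dd} < R_{cc}. -/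
lemma R_eq_two_mul_r_mul {α ρ β ζ r R η : ℝ} (hβρ : β * ρ ≠ 0) (hβρζ : β * ρ + ζ ≠ 0)
    (hr : r = α * ζ / ((β * ρ + ζ) * ρ)) (hR : R = 2 * α * ζ / ((β * ρ + 2 * ζ) * ρ))
    (hη : η = ζ / (β * ρ)) :
    R = 2 * r * ((1 + η) / (1 + 2 * η)) := by
  subst hr hR hη
  have hρ : ρ ≠ 0 := right_ne_zero_of_mul hβρ
  rw [← mul_div_assoc 2 ζ, one_add_div hβρ, one_add_div hβρ, div_div_div_cancel_right₀ hβρ]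
  field_simp

lemma mul_lt_mul_of_div_lt_mul_inv {x y p q : ℝ} (hy : 0 < y) (hq : 0 < q)
    (h : x / y < p * q⁻¹) : x * q < y * p := by
  rwa [div_lt_iff₀ hy, mul_right_comm, lt_mul_inv_iff₀ hq, mul_comm p] at h

theorem stmt_4_general (αc αd ρc ρd βc βd ζc ζd : ℝ)
    (hαc : 0 < αc) (hρc : 0 < ρc) (hρd : 0 < ρd)
    (hβc : βc ∈ Set.Ioo (0:ℝ) 1) (hβd : βd ∈ Set.Ioo (0:ℝ) 1)
    (hζc : 0 < ζc) (hζd : 0 < ζd)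
    (rc rd Rcc Rdd ηc ηd : ℝ)
    (hrc : rc = αc * ζc / ((βc * ρc + ζc) * ρc))
    (hrd : rd = αd * ζd / ((βd * ρd + ζd) * ρd))
    (hRcc : Rcc = 2 * αc * ζc / ((βc * ρc + 2 * ζc) * ρc))
    (hRdd : Rdd = 2 * αd * ζd / ((βd * ρd + 2 * ζd) * ρd))
    (hηc : ηc = ζc / (βc * ρc)) (hηd : ηd = ζd / (βd * ρd))
    (hcond : rd / rc < ((1 + ηc) / (1 + 2 * ηc)) * ((1 + 2 * ηd) / (1 + ηd))) :
    Rdd < Rcc := by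
  obtain ⟨hβc, -⟩ := hβc
  obtain ⟨hβd, -⟩ := hβd
  have hrc_pos : 0 < rc := hrc ▸ by positivity
  have hηd_pos : 0 < ηd := hηd ▸ by positivity
  rw [R_eq_two_mul_r_mul (by positivity) (by positivity) hrc hRcc hηc,
    R_eq_two_mul_r_mul (by positivity) (by positivity) hrd hRdd hηd]
  rw [← inv_div (1 + ηd)] at hcond
  have := mul_lt_mul_of_div_lt_mul_inv hrc_pos (by positivity) hcond
  linarith

theorem stmt_4 (αc αd ρc ρd βc βd ζc ζd : ℝ)
    (hαc : 0 < αc) (hαd : 0 < αd) (hρc : 0 < ρc) (hρd : 0 < ρd)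
    (hβc : βc ∈ Set.Ioo (0:ℝ) 1) (hβd : βd ∈ Set.Ioo (0:ℝ) 1)
    (hζc : 0 < ζc) (hζd : 0 < ζd)
    (rc rd Rcc Rdd ηc ηd : ℝ)
    (hrc : rc = αc * ζc / ((βc * ρc + ζc) * ρc))
    (hrd : rd = αd * ζd / ((βd * ρd + ζd) * ρd))
    (hRcc : Rcc = 2 * αc * ζc / ((βc * ρc + 2 * ζc) * ρc))
    (hRdd : Rdd = 2 * αd * ζd / ((βd * ρd + 2 * ζd) * ρd))
    (hηc : ηc = ζc / (βc * ρc)) (hηd : ηd = ζd / (βd * ρd))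
    (hcond : rd / rc < ((1 + ηc) / (1 + 2 * ηc)) * ((1 + 2 * ηd) / (1 + ηd))) :
    Rdd < Rcc :=
  stmt_4_general αc αd ρc ρd βc βd ζc ζd hαc hρc hρd hβc hβd hζc hζd rc rd Rcc Rdd ηc ηd hrc hrd
    hRcc hRdd hηc hηd hcond
end

section
/- In the toy example, if both conditions 1/(1+2η^{(c)}) < r_d/r_c and r_d/r_c < min{1, ((1+η^{(c)})/(1+2η^{(c)}))·((1+2η^{(d)})/(1+η^{(d)}))} hold, then R_{cd} > R_{cc} > R_{dd}, and the mixed strategy p = (1 + (R_{cd} − R_{cc})/(R_{cd} − R_{dd}))^{−1} achieves an expected joint reward strictly greater than the maximum joint reward R_{cc} obtainable from any pure strategy profile where both players use the same pure strategy. -/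
/-!
Write `b = βρ` and `η = ζ / b`. Then `R_ii = 2 r_i (1 + η_i) / (1 + 2 η_i)`, and in terms of the
ratio `r_d / r_c` the two conditions are exactly `R_cc < R_cd` and `R_dd < R_cc`. For any
`R_dd < R_cc < R_cd` the mixed strategy `p = (R_cd - R_dd) / ((R_cd - R_cc) + (R_cd - R_dd))`
earns `R_cc + (R_cd - R_cc)² / ((R_cd - R_cc) + (R_cd - R_dd))`.
-/

/-- `R_ii`, expressed through `r_i` and `η_i`. -/
noncomputable def selfReward (r η : ℝ) : ℝ := 2 * r * ((1 + η) / (1 + 2 * η))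

lemma selfReward_eq {α ρ b ζ : ℝ} (hρ : ρ ≠ 0) (hb : 0 < b) (hζ : 0 ≤ ζ) :
    2 * α * ζ / ((b + 2 * ζ) * ρ) = selfReward (α * ζ / ((b + ζ) * ρ)) (ζ / b) := by
  have : b + ζ ≠ 0 := by positivity
  have : b + 2 * ζ ≠ 0 := by positivity
  unfold selfReward
  field_simp

lemma selfReward_lt_add_iff {r r' η : ℝ} (hr : 0 < r) (hη : 0 < 1 + 2 * η) :
    selfReward r η < r + r' ↔ 1 / (1 + 2 * η) < r' / r := by
  unfold selfReward
  rw [div_lt_div_iff₀ hη hr, mul_div_assoc', div_lt_iff₀ hη]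
  constructor <;> intro h <;> nlinarith

lemma selfReward_lt_selfReward_iff {r r' η η' : ℝ} (hr : 0 < r) (hη : 0 < 1 + 2 * η)
    (hη' : 0 < 1 + η') (hη'₂ : 0 < 1 + 2 * η') :
    selfReward r' η' < selfReward r η ↔
      r' / r < (1 + η) / (1 + 2 * η) * ((1 + 2 * η') / (1 + η')) := by
  unfold selfReward
  rw [mul_div_assoc', mul_div_assoc', div_lt_div_iff₀ hη'₂ hη, div_lt_iff₀ hr,
    div_mul_div_comm, div_mul_eq_mul_div, lt_div_iff₀ (by positivity)]
  constructor <;> intro h <;> nlinarith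

/-- Expected reward when both players play `c` with probability `p`. -/
noncomputable def mixedReward (Rcc Rcd Rdd p : ℝ) : ℝ :=
  Rcc * p ^ 2 + 2 * Rcd * p * (1 - p) + Rdd * (1 - p) ^ 2

lemma inv_one_add_div_sub {A B C : ℝ} (hBC : B - C ≠ 0) :
    (1 + (B - A) / (B - C))⁻¹ = (B - C) / ((B - A) + (B - C)) := by
  rw [← inv_div]
  field_simp
  ring

lemma mixedReward_eq {A B C : ℝ} (hs : (B - A) + (B - C) ≠ 0) :
    mixedReward A B C ((B - C) / ((B - A) + (B - C))) =
      A + (B - A) ^ 2 / ((B - A) + (B - C)) := by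
  unfold mixedReward
  field_simp
  ring

lemma lt_mixedReward {A B C : ℝ} (hAB : A < B) (hCA : C < A) :
    A < mixedReward A B C (1 + (B - A) / (B - C))⁻¹ := by
  have hs : 0 < (B - A) + (B - C) := by linarith
  rw [inv_one_add_div_sub (by linarith), mixedReward_eq hs.ne']
  have : 0 < (B - A) ^ 2 / ((B - A) + (B - C)) := div_pos (pow_pos (sub_pos.2 hAB) 2) hs
  linarith

theorem stmt_7_general (αc αd ρc ρd βc βd ζc ζd : ℝ)
    (hαc : 0 < αc) (hρc : 0 < ρc) (hρd : 0 < ρd)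
    (hβc : βc ∈ Set.Ioo (0:ℝ) 1) (hβd : βd ∈ Set.Ioo (0:ℝ) 1)
    (hζc : 0 < ζc) (hζd : 0 < ζd)
    (rc rd Rcd Rcc Rdd ηc ηd : ℝ) (E : ℝ → ℝ)
    (hrc : rc = αc * ζc / ((βc * ρc + ζc) * ρc))
    (hrd : rd = αd * ζd / ((βd * ρd + ζd) * ρd))
    (hRcd : Rcd = rc + rd)
    (hRcc : Rcc = 2 * αc * ζc / ((βc * ρc + 2 * ζc) * ρc))
    (hRdd : Rdd = 2 * αd * ζd / ((βd * ρd + 2 * ζd) * ρd))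
    (hηc : ηc = ζc / (βc * ρc)) (hηd : ηd = ζd / (βd * ρd))
    (hE : ∀ p, E p = Rcc * p ^ 2 + 2 * Rcd * p * (1 - p) + Rdd * (1 - p) ^ 2)
    (hcond1 : 1 / (1 + 2 * ηc) < rd / rc)
    (hcond2 : rd / rc < min 1 (((1 + ηc) / (1 + 2 * ηc)) * ((1 + 2 * ηd) / (1 + ηd)))) :
    Rcd > Rcc ∧ Rcc > Rdd ∧
    E ((1 + (Rcd - Rcc) / (Rcd - Rdd))⁻¹) > Rcc := by
  have hbc : 0 < βc * ρc := mul_pos hβc.1 hρc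
  have hbd : 0 < βd * ρd := mul_pos hβd.1 hρd
  have hrc_pos : 0 < rc := hrc ▸ by positivity
  have hηc_nonneg : 0 ≤ ηc := hηc ▸ by positivity
  have hηd_nonneg : 0 ≤ ηd := hηd ▸ by positivity
  have hRcc' : Rcc = selfReward rc ηc := by
    rw [hRcc, hrc, hηc]; exact selfReward_eq hρc.ne' hbc hζc.le
  have hRdd' : Rdd = selfReward rd ηd := by
    rw [hRdd, hrd, hηd]; exact selfReward_eq hρd.ne' hbd hζd.le
  have hcross : Rcc < Rcd := by
    rw [hRcc', hRcd]; exact (selfReward_lt_add_iff hrc_pos (by linarith)).2 hcond1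
  have hself : Rdd < Rcc := by
    rw [hRcc', hRdd']
    exact (selfReward_lt_selfReward_iff hrc_pos (by linarith) (by linarith) (by linarith)).2
      (hcond2.trans_le (min_le_right _ _))
  refine ⟨hcross, hself, ?_⟩
  rw [hE]
  exact lt_mixedReward hcross hself

theorem stmt_7 (αc αd ρc ρd βc βd ζc ζd : ℝ)
    (hαc : 0 < αc) (hαd : 0 < αd) (hρc : 0 < ρc) (hρd : 0 < ρd)
    (hβc : βc ∈ Set.Ioo (0:ℝ) 1) (hβd : βd ∈ Set.Ioo (0:ℝ) 1)
    (hζc : 0 < ζc) (hζd : 0 < ζd)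
    (rc rd Rcd Rcc Rdd ηc ηd : ℝ) (E : ℝ → ℝ)
    (hrc : rc = αc * ζc / ((βc * ρc + ζc) * ρc))
    (hrd : rd = αd * ζd / ((βd * ρd + ζd) * ρd))
    (hRcd : Rcd = rc + rd)
    (hRcc : Rcc = 2 * αc * ζc / ((βc * ρc + 2 * ζc) * ρc))
    (hRdd : Rdd = 2 * αd * ζd / ((βd * ρd + 2 * ζd) * ρd))
    (hηc : ηc = ζc / (βc * ρc)) (hηd : ηd = ζd / (βd * ρd))
    (hE : ∀ p, E p = Rcc * p ^ 2 + 2 * Rcd * p * (1 - p) + Rdd * (1 - p) ^ 2)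
    (hcond1 : 1 / (1 + 2 * ηc) < rd / rc)
    (hcond2 : rd / rc < min 1 (((1 + ηc) / (1 + 2 * ηc)) * ((1 + 2 * ηd) / (1 + ηd)))) :
    Rcd > Rcc ∧ Rcc > Rdd ∧
    E ((1 + (Rcd - Rcc) / (Rcd - Rdd))⁻¹) > Rcc :=
  stmt_7_general αc αd ρc ρd βc βd ζc ζd hαc hρc hρd hβc hβd hζc hζd rc rd Rcd Rcc Rdd ηc ηd E hrc
    hrd hRcd hRcc hRdd hηc hηd hE hcond1 hcond2
end
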